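/- Let 1 ≤ i ≤ n−1. The restriction homomorphism O(V_i) → O(V_i ∩ V_{i+1}) restricts to a bijection from the fixed subalgebra O(V_i)^{s_i} onto O(V_i ∩ V_{i+1}); likewise the restriction O(V_{i+1})^{s_{i+1}} → O(V_i ∩ V_{i+1}) is bijective. Equivalently, O(V_i ∩ V_{i+1}) is a free module of rank 1, with basis {1}, over each of O(V_i)^{s_i} and O(V_{i+1})^{s_{i+1}}. -/

import Mathlib

/-! Basic setup: type A_n geometric representation, Weyl lines, combinatorics. -/

set_option linter.unusedSectionVars false
set_option synthInstance.maxHeartbeats 1000000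
set_option maxHeartbeats 1000000

namespace TLpaper

/-- A permutation is a transposition. -/
def IsTransposition {α : Type} [DecidableEq α] (σ : Equiv.Perm α) : Prop :=
  ∃ a b, a ≠ b ∧ σ = Equiv.swap a b

variable (k : Type) [Field k] [CharZero k] (n : ℕ)

/-- The reflecting hyperplane of a permutation `t` inside `V = {x | ∑ x i = 0}`:
the set of points of `V` fixed by permuting the coordinates by `t`.  For a
transposition `t = (a b)` this is `{x ∈ V | x a = x b}`. -/
def Hyp (t : Equiv.Perm (Fin (n + 1))) : Set (Fin (n + 1) → k) :=
  {x | (∑ i, x i) = 0 ∧ ∀ i, x (t i) = x i}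

/-- A Weyl line: a one-dimensional linear subspace of `V` which is an
intersection of a (possibly empty) family of reflecting hyperplanes. -/
def IsWeylLine (L : Set (Fin (n + 1) → k)) : Prop :=
  (∃ v : Fin (n + 1) → k, v ≠ 0 ∧ L = Set.range fun c : k => c • v) ∧
  ∃ T : Set (Equiv.Perm (Fin (n + 1))),
    (∀ t ∈ T, IsTransposition t) ∧
    L = {x | (∑ i, x i) = 0} ∩ ⋂ t ∈ T, Hyp k n t

/-- `Z`: the union of all Weyl lines. -/
def ZZ : Set (Fin (n + 1) → k) := ⋃ L ∈ {L | IsWeylLine k n L}, L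

/-- `V_t`: the union of all Weyl lines transverse to `t` (i.e. not contained in `H_t`). -/
def Vt (t : Equiv.Perm (Fin (n + 1))) : Set (Fin (n + 1) → k) :=
  ⋃ L ∈ {L | IsWeylLine k n L ∧ ¬L ⊆ Hyp k n t}, L

open Fin.NatCast in
/-- The simple transposition `s_i = (i, i+1)` (0-indexed: it swaps coordinates
`i` and `i+1` of `Fin (n+1)`, for `i < n`). -/
def simple (i : ℕ) : Equiv.Perm (Fin (n + 1)) :=
  Equiv.swap (i : Fin (n + 1)) ((i + 1 : ℕ) : Fin (n + 1))

/-- `V_i := V_{s_i}`. -/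
def Vi (i : ℕ) : Set (Fin (n + 1) → k) := Vt k n (simple n i)

/-- The action of a permutation on a subset of `k^{n+1}` (permuting coordinates). -/
def permSet (σ : Equiv.Perm (Fin (n + 1))) (W : Set (Fin (n + 1) → k)) :
    Set (Fin (n + 1) → k) :=
  (fun x => x ∘ σ) '' W

/-- `i · W := V_i ∩ (W ∪ s_i (W))`. -/
def dotAct (i : ℕ) (W : Set (Fin (n + 1) → k)) : Set (Fin (n + 1) → k) :=
  Vi k n i ∩ (W ∪ permSet k n (simple n i) W)

/-- The set `W_{i_1 ⋯ i_m}` associated with a sequence of indices. -/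
def seqSet : List ℕ → Set (Fin (n + 1) → k)
  | [] => ZZ k n
  | [i] => Vi k n i
  | i :: j :: l => dotAct k n i (seqSet (j :: l))

/-- Membership in the family `𝒱_n`. -/
def memVn (W : Set (Fin (n + 1) → k)) : Prop :=
  ∃ l : List ℕ, l ≠ [] ∧ (∀ i ∈ l, i < n) ∧ W = seqSet k n l

/-- A set of pairwise commuting transpositions. -/
def CommTranspositions (Q : Set (Equiv.Perm (Fin (n + 1)))) : Prop :=
  (∀ t ∈ Q, IsTransposition t) ∧ ∀ t ∈ Q, ∀ t' ∈ Q, t * t' = t' * t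


/-! Coordinate rings of subvarieties of `k^{n+1}`. -/

noncomputable section

/-- The ring `O(X)` of regular functions on `X`: the quotient of the polynomial ring
`k[X_0, …, X_n]` by the vanishing ideal of `X`. -/
def O (X : Set (Fin (n + 1) → k)) : Type :=
  MvPolynomial (Fin (n + 1)) k ⧸ MvPolynomial.vanishingIdeal k X

instance (X : Set (Fin (n + 1) → k)) : CommRing (O k n X) :=
  inferInstanceAs (CommRing (MvPolynomial (Fin (n + 1)) k ⧸ MvPolynomial.vanishingIdeal k X))

theorem vanishingIdeal_anti {X Y : Set (Fin (n + 1) → k)} (h : X ⊆ Y) :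
    MvPolynomial.vanishingIdeal k Y ≤ MvPolynomial.vanishingIdeal k X := fun p hp => by
  rw [MvPolynomial.mem_vanishingIdeal_iff] at hp ⊢
  exact fun x hx => hp x (h hx)

/-- The (surjective) restriction homomorphism `O(Y) → O(X)` for `X ⊆ Y`. -/
def res {X Y : Set (Fin (n + 1) → k)} (h : X ⊆ Y) : O k n Y →+* O k n X :=
  Ideal.Quotient.factor (vanishingIdeal_anti k n h)

open Classical in
/-- The ring endomorphism of `O(X)` induced by a permutation `σ` of the coordinates
(when `X` is `σ`-stable; the definition branches on this (true, in our uses)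
stability condition to be total). -/
def permO (σ : Equiv.Perm (Fin (n + 1))) (X : Set (Fin (n + 1) → k)) :
    O k n X →+* O k n X :=
  if h : ∀ x ∈ X, x ∘ σ ∈ X then
    Ideal.Quotient.lift _
      ((Ideal.Quotient.mk _).comp (MvPolynomial.rename (R := k) ⇑σ).toRingHom)
      (fun p hp => by
        have hmem : (MvPolynomial.rename (R := k) ⇑σ) p ∈
            MvPolynomial.vanishingIdeal k X := by
          rw [MvPolynomial.mem_vanishingIdeal_iff]
          intro x hx
          rw [MvPolynomial.aeval_rename]
          exact (MvPolynomial.mem_vanishingIdeal_iff.1 hp) _ (h x hx)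
        exact Ideal.Quotient.eq_zero_iff_mem.2 hmem)
  else RingHom.id _

/-- The fixed subalgebra `O(V_i)^{s_i}` of `O(V_i)` under the automorphism induced
by the simple transposition `s_i`. -/
def fixedO (i : ℕ) : Subring (O k n (Vi k n i)) :=
  RingHom.eqLocus (permO k n (simple n i) (Vi k n i)) (RingHom.id _)

open Fin.NatCast in
/-- The image `f_i` of `X_i − X_{i+1}` in the coordinate ring `O(X)`. -/
def fbar (X : Set (Fin (n + 1) → k)) (i : ℕ) : O k n X :=
  Ideal.Quotient.mk _
    (MvPolynomial.X (i : Fin (n + 1)) - MvPolynomial.X ((i + 1 : ℕ) : Fin (n + 1)))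

theorem Vt_subset_ZZ (t : Equiv.Perm (Fin (n + 1))) : Vt k n t ⊆ ZZ k n := by
  refine Set.iUnion₂_subset fun L hL => ?_
  exact Set.subset_iUnion₂ (s := fun L _ => L) L hL.1

theorem Vi_subset_ZZ (i : ℕ) : Vi k n i ⊆ ZZ k n := Vt_subset_ZZ k n _

theorem seqSet_subset_ZZ : ∀ l : List ℕ, seqSet k n l ⊆ ZZ k n
  | [] => subset_rfl
  | [_] => Vi_subset_ZZ k n _
  | _ :: _ :: _ => Set.inter_subset_left.trans (Vi_subset_ZZ k n _)

end

/-!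
On a Weyl line every vector takes at most two distinct coordinate values. Hence
`x_i = x_{i+2}` on `W = V_i ∩ V_{i+1}`, and every point of `V_i` lies in `W` or in `s_i W`.
Injectivity: an `s_i`-invariant function vanishing on `W` also vanishes on `s_i W`.
Surjectivity: given `q`, write `q - s_i q = f_i r` with `r` invariant; the polynomial
`u = 2 X_{i+2} - X_i - X_{i+1}` is invariant and equals `f_i` on `W`, so
`(q + s_i q + u r) / 2` is an invariant lift of `q`. The case of `s_{i+1}` is symmetric.
-/

open MvPolynomial Equiv

section SwapDivisibility

variable {σ R : Type*} [DecidableEq σ] [CommRing R]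

theorem X_sub_X_dvd_sub_rename_update (a b : σ) (q : MvPolynomial σ R) :
    X a - X b ∣ q - rename (Function.update id b a) q := by
  set I := Ideal.span {(X a - X b : MvPolynomial σ R)}
  have hmk : (Ideal.Quotient.mkₐ R I).comp (rename (Function.update id b a)) =
      Ideal.Quotient.mkₐ R I := by
    refine MvPolynomial.algHom_ext fun j => ?_
    rcases eq_or_ne j b with rfl | hj
    · simp [Ideal.Quotient.mkₐ_eq_mk, Ideal.Quotient.eq, I]
    · simp [Function.update_of_ne hj]
  rw [← Ideal.mem_span_singleton, ← Ideal.Quotient.eq]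
  exact (DFunLike.congr_fun hmk q).symm

theorem exists_eq_X_sub_X_mul_of_rename_swap_eq_neg [IsDomain R] [CharZero R] {a b : σ}
    (hab : a ≠ b) {q : MvPolynomial σ R} (hq : rename (swap a b) q = -q) :
    ∃ r, q = (X a - X b) * r ∧ rename (swap a b) r = r := by
  have hcollapse : Function.update id b a ∘ swap a b = Function.update id b a := by
    funext j
    simp only [Function.comp_apply, swap_apply_def, Function.update_apply, id]
    split_ifs <;> simp_all
  have hq0 : rename (Function.update id b a) q = 0 := by
    have h := congrArg (rename (Function.update id b a)) hq
    rw [rename_rename, hcollapse, map_neg, eq_neg_iff_add_eq_zero] at h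
    exact add_self_eq_zero.1 h
  obtain ⟨r, hr⟩ := X_sub_X_dvd_sub_rename_update a b q
  rw [hq0, sub_zero] at hr
  refine ⟨r, hr, mul_left_cancel₀ (sub_ne_zero.2 (X_injective.ne hab.symm)) ?_⟩
  rw [hr, map_mul, map_sub, rename_X, rename_X, swap_apply_left, swap_apply_right] at hq
  linear_combination hq

end SwapDivisibility

variable {k n}

section CoordinateRings

theorem permO_mk {Y : Set (Fin (n + 1) → k)} {σ : Perm (Fin (n + 1))}
    (hstab : ∀ x ∈ Y, x ∘ σ ∈ Y) (p : MvPolynomial (Fin (n + 1)) k) :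
    permO k n σ Y (Ideal.Quotient.mk _ p) = Ideal.Quotient.mk _ (rename σ p) := by
  rw [permO]
  erw [dif_pos hstab]
  rfl

theorem res_mk {W Y : Set (Fin (n + 1) → k)} (hWY : W ⊆ Y) (p : MvPolynomial (Fin (n + 1)) k) :
    res k n hWY (Ideal.Quotient.mk _ p) = Ideal.Quotient.mk _ p :=
  Ideal.Quotient.factor_mk _ p

theorem injective_res_comp_fixed {W Y : Set (Fin (n + 1) → k)} {σ : Perm (Fin (n + 1))}
    (hWY : W ⊆ Y) (hstab : ∀ x ∈ Y, x ∘ σ ∈ Y) (hcover : ∀ x ∈ Y, x ∈ W ∨ x ∘ σ ∈ W) :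
    Function.Injective
      ((res k n hWY).comp (RingHom.eqLocus (permO k n σ Y) (RingHom.id _)).subtype) := by
  rw [injective_iff_map_eq_zero]
  rintro ⟨g, hg⟩ hg0
  obtain ⟨p, rfl⟩ := Ideal.Quotient.mk_surjective g
  have hfix : ∀ x ∈ Y, aeval (x ∘ σ) p = aeval x p := by
    have h : rename σ p - p ∈ vanishingIdeal k Y := by
      rw [← Ideal.Quotient.mk_eq_mk_iff_sub_mem, ← permO_mk hstab]
      exact hg
    intro x hx
    have h' := mem_vanishingIdeal_iff.1 h x hx
    rwa [map_sub, aeval_rename, sub_eq_zero] at h'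
  have hW : ∀ x ∈ W, aeval x p = 0 := by
    have h : Ideal.Quotient.mk (vanishingIdeal k W) p = 0 := (res_mk hWY p).symm.trans hg0
    exact mem_vanishingIdeal_iff.1 (Ideal.Quotient.eq_zero_iff_mem.1 h)
  refine Subtype.ext (Ideal.Quotient.eq_zero_iff_mem.2 (mem_vanishingIdeal_iff.2 fun x hx => ?_))
  rcases hcover x hx with h | h
  · exact hW x h
  · exact hfix x hx ▸ hW _ h

theorem surjective_res_comp_fixed_swap {W Y : Set (Fin (n + 1) → k)} {a b : Fin (n + 1)}
    (hab : a ≠ b) (hWY : W ⊆ Y) (hstab : ∀ x ∈ Y, x ∘ swap a b ∈ Y)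
    {u : MvPolynomial (Fin (n + 1)) k} (hu : rename (swap a b) u = u)
    (huW : u - (X a - X b) ∈ vanishingIdeal k W) :
    Function.Surjective
      ((res k n hWY).comp (RingHom.eqLocus (permO k n (swap a b) Y) (RingHom.id _)).subtype) := by
  intro g
  obtain ⟨q, rfl⟩ := Ideal.Quotient.mk_surjective g
  have hinvol : ∀ p : MvPolynomial (Fin (n + 1)) k, rename (swap a b) (rename (swap a b) p) = p :=
    fun p => by
      rw [rename_rename, show ⇑(swap a b) ∘ ⇑(swap a b) = id from funext (swap_apply_self a b),
        rename_id_apply]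
  obtain ⟨r, hr, hrs⟩ := exists_eq_X_sub_X_mul_of_rename_swap_eq_neg hab
    (q := q - rename (swap a b) q) (by rw [map_sub, hinvol, neg_sub])
  set p := C (2⁻¹ : k) * (q + rename (swap a b) q + u * r)
  have hp : rename (swap a b) p = p := by
    simp only [p, map_mul, map_add, rename_C, hinvol, hu, hrs]
    ring
  have hpq : p - q = C (2⁻¹ : k) * ((u - (X a - X b)) * r) := by
    have h2 : (C (2⁻¹ : k) : MvPolynomial (Fin (n + 1)) k) * 2 = 1 := by
      rw [← map_ofNat C 2, ← C_mul, inv_mul_cancel₀ two_ne_zero, C_1]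
    linear_combination (-C (2⁻¹ : k)) * hr + q * h2
  refine ⟨⟨Ideal.Quotient.mk _ p, ?_⟩, ?_⟩
  · change permO k n (swap a b) Y _ = _
    rw [permO_mk hstab, hp]
    rfl
  · change res k n hWY (Ideal.Quotient.mk _ p) = _
    rw [res_mk]
    refine (Ideal.Quotient.mk_eq_mk_iff_sub_mem _ _).2 ?_
    rw [hpq]
    exact Ideal.mul_mem_left _ _ (Ideal.mul_mem_right _ _ huW)

end CoordinateRings

section WeylLines

theorem comp_mem_Hyp_iff {σ t : Perm (Fin (n + 1))} {x : Fin (n + 1) → k} :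
    x ∘ σ ∈ Hyp k n t ↔ x ∈ Hyp k n (σ * t * σ⁻¹) := by
  simp only [Hyp, Set.mem_ofPred_eq, Function.comp_apply, Perm.mul_apply, sum_comp σ x]
  exact and_congr_right fun _ =>
    ⟨fun h j => by simpa using h (σ⁻¹ j), fun h i => by simpa using h (σ i)⟩

theorem permSet_eq_preimage (σ : Perm (Fin (n + 1))) (S : Set (Fin (n + 1) → k)) :
    permSet k n σ S = (fun y => y ∘ ⇑σ⁻¹) ⁻¹' S :=
  congrFun (Set.image_eq_preimage_of_inverse (f := fun x : Fin (n + 1) → k => x ∘ ⇑σ)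
    (fun x => by ext; simp) (fun x => by ext; simp)) S

theorem IsWeylLine.permSet {L : Set (Fin (n + 1) → k)} (hL : IsWeylLine k n L)
    (σ : Perm (Fin (n + 1))) : IsWeylLine k n (permSet k n σ L) := by
  obtain ⟨⟨v, hv0, hLv⟩, T, hT, hLT⟩ := hL
  refine ⟨⟨v ∘ σ, fun h => hv0 ?_, ?_⟩, (fun t => σ⁻¹ * t * σ) '' T, ?_, ?_⟩
  · simpa [Function.comp_assoc] using congrArg (· ∘ ⇑σ⁻¹) h
  · rw [hLv, TLpaper.permSet, ← Set.range_comp]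
    rfl
  · rintro _ ⟨t, ht, rfl⟩
    obtain ⟨a, b, hab, rfl⟩ := hT t ht
    exact ⟨σ⁻¹ a, σ⁻¹ b, σ⁻¹.injective.ne hab, by rw [swap_apply_apply, inv_inv]⟩
  · rw [hLT, permSet_eq_preimage, Set.preimage_inter, Set.preimage_iInter₂, Set.biInter_image]
    congr 1
    · ext y
      simp [sum_comp]
    · refine Set.iInter₂_congr fun t _ => Set.ext fun y => ?_
      rw [Set.mem_preimage, comp_mem_Hyp_iff, inv_inv]

theorem IsWeylLine.sum_eq_zero {L : Set (Fin (n + 1) → k)} (hL : IsWeylLine k n L)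
    {x : Fin (n + 1) → k} (hx : x ∈ L) : ∑ j, x j = 0 := by
  obtain ⟨-, T, -, rfl⟩ := hL
  exact hx.1

theorem IsWeylLine.mem_of_factorsThrough {L : Set (Fin (n + 1) → k)} (hL : IsWeylLine k n L)
    {x y : Fin (n + 1) → k} (hx : x ∈ L) (hy : ∑ j, y j = 0) (hyx : y.FactorsThrough x) :
    y ∈ L := by
  obtain ⟨-, T, -, rfl⟩ := hL
  exact ⟨hy, Set.mem_iInter₂.2 fun t ht =>
    ⟨hy, fun j => hyx ((Set.mem_iInter₂.1 hx.2 t ht).2 j)⟩⟩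

theorem IsWeylLine.exists_eq_smul {L : Set (Fin (n + 1) → k)} (hL : IsWeylLine k n L)
    {x y : Fin (n + 1) → k} (hx : x ∈ L) (hx0 : x ≠ 0) (hy : y ∈ L) : ∃ e : k, y = e • x := by
  obtain ⟨⟨v, -, rfl⟩, -⟩ := hL
  obtain ⟨c, rfl⟩ := hx
  obtain ⟨d, rfl⟩ := hy
  have hc : c ≠ 0 := by rintro rfl; simp at hx0
  exact ⟨d / c, by rw [smul_smul, div_mul_cancel₀ _ hc]⟩

theorem IsWeylLine.apply_eq_of_ne {L : Set (Fin (n + 1) → k)} (hL : IsWeylLine k n L)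
    {x : Fin (n + 1) → k} (hx : x ∈ L) {a b c : Fin (n + 1)} (hab : x a ≠ x b)
    (hbc : x b ≠ x c) : x a = x c := by
  -- `y`, the centred `g`, satisfies every equation that `x` does, so it is a multiple of `x`;
  -- as `y b = y c` while `x b ≠ x c`, it is `0`
  set g : Fin (n + 1) → k := fun j => (x j - x b) * (x j - x c)
  set y : Fin (n + 1) → k := fun j => g j - (∑ j, g j) / (n + 1)
  have hy : y ∈ L := by
    refine hL.mem_of_factorsThrough hx ?_ fun j j' h => by simp only [y, g, h]
    simp only [y, Finset.sum_sub_distrib, Finset.sum_const, Finset.card_univ, Fintype.card_fin,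
      nsmul_eq_mul]
    field_simp
    push_cast
    ring
  obtain ⟨e, he⟩ := hL.exists_eq_smul hx (fun h => hab (by simp [h])) hy
  have hyb : y b = y c := by simp [y, g]
  have he0 : e = 0 := by
    rw [he] at hyb
    simpa [sub_eq_zero, hbc] using congrArg (· - e * x c) hyb
  have hya : y a = y b := by simp [he, he0]
  have hga : (x a - x b) * (x a - x c) = 0 := by simpa [y, g] using hya
  exact sub_eq_zero.1 ((mul_eq_zero.1 hga).resolve_left (sub_ne_zero.2 hab))

end WeylLines

section TransverseLines

theorem mem_Hyp_swap_iff {a b : Fin (n + 1)} {x : Fin (n + 1) → k} :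
    x ∈ Hyp k n (swap a b) ↔ ∑ j, x j = 0 ∧ x a = x b := by
  refine and_congr_right fun _ => ⟨fun h => by simpa using (h a).symm, fun h j => ?_⟩
  rw [swap_apply_def]
  split_ifs <;> simp_all

theorem mem_Vt_swap_iff {a b : Fin (n + 1)} {x : Fin (n + 1) → k} :
    x ∈ Vt k n (swap a b) ↔ ∃ L, IsWeylLine k n L ∧ x ∈ L ∧ ∃ z ∈ L, z a ≠ z b := by
  simp only [Vt, Set.mem_iUnion₂, Set.mem_ofPred_eq, exists_prop, Set.not_subset]
  refine exists_congr fun L => ⟨?_, ?_⟩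
  · rintro ⟨⟨hL, z, hz, hzH⟩, hx⟩
    exact ⟨hL, hx, z, hz, fun h => hzH (mem_Hyp_swap_iff.2 ⟨hL.sum_eq_zero hz, h⟩)⟩
  · rintro ⟨hL, hx, z, hz, hne⟩
    exact ⟨⟨hL, z, hz, fun h => hne (mem_Hyp_swap_iff.1 h).2⟩, hx⟩

theorem comp_swap_mem_Vt {a b : Fin (n + 1)} {x : Fin (n + 1) → k}
    (hx : x ∈ Vt k n (swap a b)) : x ∘ swap a b ∈ Vt k n (swap a b) := by
  obtain ⟨L, hL, hxL, z, hzL, hz⟩ := mem_Vt_swap_iff.1 hx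
  exact mem_Vt_swap_iff.2 ⟨_, hL.permSet (swap a b), ⟨x, hxL, rfl⟩, z ∘ swap a b,
    ⟨z, hzL, rfl⟩, by simpa using hz.symm⟩

theorem mem_Vt_or_comp_mem_Vt {a b c : Fin (n + 1)} (hca : c ≠ a) (hcb : c ≠ b)
    {x : Fin (n + 1) → k} (hx : x ∈ Vt k n (swap a b)) :
    x ∈ Vt k n (swap b c) ∨ x ∘ swap a b ∈ Vt k n (swap b c) := by
  obtain ⟨L, hL, hxL, z, hzL, hz⟩ := mem_Vt_swap_iff.1 hx
  by_cases hzbc : z b = z c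
  · refine .inr (mem_Vt_swap_iff.2 ⟨_, hL.permSet (swap a b), ⟨x, hxL, rfl⟩, z ∘ swap a b,
      ⟨z, hzL, rfl⟩, ?_⟩)
    simpa [swap_apply_of_ne_of_ne hca hcb, ← hzbc] using hz
  · exact .inl (mem_Vt_swap_iff.2 ⟨L, hL, hxL, z, hzL, hzbc⟩)

theorem apply_ne_of_mem_Vt_swap {a b : Fin (n + 1)} {x : Fin (n + 1) → k}
    (hx : x ∈ Vt k n (swap a b)) (hx0 : x ≠ 0) : x a ≠ x b := by
  obtain ⟨L, hL, hxL, z, hzL, hz⟩ := mem_Vt_swap_iff.1 hx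
  obtain ⟨e, rfl⟩ := hL.exists_eq_smul hxL hx0 hzL
  intro h
  exact hz (by simp [h])

theorem apply_eq_of_mem_Vt_inter {a b c : Fin (n + 1)} {x : Fin (n + 1) → k}
    (hab : x ∈ Vt k n (swap a b)) (hbc : x ∈ Vt k n (swap b c)) : x a = x c := by
  rcases eq_or_ne x 0 with rfl | hx0
  · rfl
  obtain ⟨L, hL, hxL, -⟩ := mem_Vt_swap_iff.1 hab
  exact hL.apply_eq_of_ne hxL (apply_ne_of_mem_Vt_swap hab hx0) (apply_ne_of_mem_Vt_swap hbc hx0)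

theorem bijective_res_fixed_Vt_inter {a b c : Fin (n + 1)} (hab : a ≠ b) (hbc : b ≠ c)
    (hca : c ≠ a) {σ τ : Perm (Fin (n + 1))} (hσ : σ = swap a b) (hτ : τ = swap b c)
    {W : Set (Fin (n + 1) → k)} (hW : W = Vt k n σ ∩ Vt k n τ) (hWY : W ⊆ Vt k n σ) :
    Function.Bijective ((res k n hWY).comp
      (RingHom.eqLocus (permO k n σ (Vt k n σ)) (RingHom.id _)).subtype) := by
  subst hσ hτ hW
  have hstab : ∀ x ∈ Vt k n (swap a b), x ∘ swap a b ∈ Vt k n (swap a b) :=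
    fun _ => comp_swap_mem_Vt
  refine ⟨injective_res_comp_fixed hWY hstab fun x hx => ?_,
    surjective_res_comp_fixed_swap hab hWY hstab (u := 2 * X c - X a - X b) ?_ ?_⟩
  · exact (mem_Vt_or_comp_mem_Vt hca hbc.symm hx).imp (⟨hx, ·⟩) (⟨hstab x hx, ·⟩)
  · simp [swap_apply_of_ne_of_ne hca hbc.symm, map_ofNat]
    ring
  · refine mem_vanishingIdeal_iff.2 fun x ⟨hxab, hxbc⟩ => ?_
    simp [apply_eq_of_mem_Vt_inter hxab hxbc]
    ring

end TransverseLines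

/-- (0-indexed, `i + 1 < n`.)  The restriction homomorphism
`O(V_i) → O(V_i ∩ V_{i+1})` restricts to a bijection from `O(V_i)^{s_i}` onto
`O(V_i ∩ V_{i+1})`; likewise `O(V_{i+1})^{s_{i+1}} → O(V_i ∩ V_{i+1})` is bijective. -/
theorem res_fixed_bijective_adjacent (i : ℕ) (hi : i + 1 < n) :
    Function.Bijective
      ((res k n (Set.inter_subset_left : Vi k n i ∩ Vi k n (i + 1) ⊆ Vi k n i)).comp
        (fixedO k n i).subtype) ∧
    Function.Bijective
      ((res k n (Set.inter_subset_right :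
          Vi k n i ∩ Vi k n (i + 1) ⊆ Vi k n (i + 1))).comp
        (fixedO k n (i + 1)).subtype) := by
  have h01 := (Fin.natCast_strictMono (n := n) (by omega) (Nat.lt_succ_self i)).ne
  have h12 := (Fin.natCast_strictMono (n := n) hi (Nat.lt_succ_self (i + 1))).ne
  have h02 := (Fin.natCast_strictMono (n := n) hi (by omega : i < i + 1 + 1)).ne
  exact ⟨bijective_res_fixed_Vt_inter h01 h12 h02.symm rfl rfl rfl _,
    bijective_res_fixed_Vt_inter h12.symm h01.symm h02 (swap_comm _ _) (swap_comm _ _)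
      (Set.inter_comm _ _) _⟩

end TLpaper
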